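/- arXiv:2011.10172 — 2 statements merged into one kernel-verified Lean document; each statement's English description precedes it below -/
import Mathlib

section
/- Let n ≥ 2, let G ∈ 𝒢_{2n}, and let M be a perfect matching of G with f(G,M) = n−1. Then G is minimal (i.e., F(G−e) ≤ n−2 for every edge e of G) if and only if for every two distinct edges e and e' of M, the subgraph of G induced by the four endpoints of e and e' is exactly an M-alternating 4-cycle (a chordless 4-cycle whose edges appear alternately in M and E(G)∖M). -/
open SimpleGraph

/-- `M` is a perfect matching of the simple graph `G`, viewed as a set of edges:
the edges of `M` are pairwise disjoint edges of `G` covering every vertex. -/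
def IsPM {V : Type*} (G : SimpleGraph V) (M : Set (Sym2 V)) : Prop :=
  M ⊆ G.edgeSet ∧
  (∀ e ∈ M, ∀ f ∈ M, e ≠ f → ∀ v : V, v ∈ e → v ∉ f) ∧
  (∀ v : V, ∃ e ∈ M, v ∈ e)

/-- `S` is a forcing set of the perfect matching `M` of `G`:
`S ⊆ M` and `M` is the unique perfect matching of `G` containing `S`. -/
def IsForcingSet {V : Type*} (G : SimpleGraph V) (M S : Set (Sym2 V)) : Prop :=
  S ⊆ M ∧ ∀ M', IsPM G M' → S ⊆ M' → M' = M

/-- The forcing number `f(G,M)`: smallest cardinality of a forcing set of `M`. -/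
noncomputable def forcingNum {V : Type*} (G : SimpleGraph V) (M : Set (Sym2 V)) : ℕ :=
  sInf {k | ∃ S, IsForcingSet G M S ∧ S.ncard = k}

/-- The minimum forcing number `f(G)`. -/
noncomputable def minForcing {V : Type*} (G : SimpleGraph V) : ℕ :=
  sInf {k | ∃ M, IsPM G M ∧ forcingNum G M = k}

/-- The maximum forcing number `F(G)`. -/
noncomputable def maxForcing {V : Type*} (G : SimpleGraph V) : ℕ :=
  sSup {k | ∃ M, IsPM G M ∧ forcingNum G M = k}

/-- Vertex connectivity `κ(G)`: least size of a set of vertices whose deletion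
disconnects the graph or leaves at most one vertex. -/
noncomputable def vertexConn {V : Type*} (G : SimpleGraph V) : ℕ :=
  sInf {k | ∃ X : Set V, X.ncard = k ∧ (¬ (G.induce Xᶜ).Connected ∨ Xᶜ.ncard ≤ 1)}

/-- Edge connectivity `λ(G)`: least size of a set of edges whose deletion
disconnects the graph. -/
noncomputable def edgeConn {V : Type*} (G : SimpleGraph V) : ℕ :=
  sInf {k | ∃ F : Set (Sym2 V), F ⊆ G.edgeSet ∧ F.ncard = k ∧ ¬ (G.deleteEdges F).Connected}

/-- `G` is `l`-extendable: `G` is connected, has at least `2l+2` vertices, has a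
perfect matching, and every matching of size `l` extends to a perfect matching. -/
def IsExtendable {V : Type*} [Fintype V] (G : SimpleGraph V) (l : ℕ) : Prop :=
  G.Connected ∧ 2 * l + 2 ≤ Fintype.card V ∧ (∃ M, IsPM G M) ∧
    ∀ N : Set (Sym2 V), N ⊆ G.edgeSet →
      (∀ e ∈ N, ∀ f ∈ N, e ≠ f → ∀ v : V, v ∈ e → v ∉ f) → N.ncard = l →
      ∃ M, IsPM G M ∧ N ⊆ M

/-- `G` is factor-critical: deleting any vertex leaves a graph with a perfect matching. -/
def IsFactorCritical {V : Type*} (G : SimpleGraph V) : Prop :=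
  ∀ v : V, ∃ M, IsPM (G.induce {v}ᶜ) M

/-- `o(G)`: the number of connected components of odd order. -/
noncomputable def oddComponents {V : Type*} (G : SimpleGraph V) : ℕ :=
  {c : G.ConnectedComponent | Odd c.supp.ncard}.ncard

/-- `G` belongs to `𝒦_{n,n}⁺`: it is obtained from `K_{n,n}` by adding edges inside one
partite set; equivalently there is an independent set `A` of size `n` all of whose
vertices are adjacent to all vertices outside `A`. -/
def InKnnPlus {V : Type*} (n : ℕ) (G : SimpleGraph V) : Prop :=
  ∃ A : Set V, A.ncard = n ∧ (∀ a ∈ A, ∀ b ∈ A, ¬ G.Adj a b) ∧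
    ∀ a ∈ A, ∀ b ∉ A, G.Adj a b

/-- `M` is a perfect matching of the subgraph of `G` induced by the vertex set `T`. -/
def IsPMOn {V : Type*} (G : SimpleGraph V) (T : Set V) (M : Set (Sym2 V)) : Prop :=
  M ⊆ G.edgeSet ∧ (∀ e ∈ M, ∀ w : V, w ∈ e → w ∈ T) ∧
  (∀ e ∈ M, ∀ f ∈ M, e ≠ f → ∀ v : V, v ∈ e → v ∉ f) ∧
  (∀ w ∈ T, ∃ e ∈ M, w ∈ e)

/-- The forcing number of the perfect matching `M` of the subgraph of `G`
induced by the vertex set `T`. -/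
noncomputable def forcingNumOn {V : Type*} (G : SimpleGraph V) (T : Set V)
    (M : Set (Sym2 V)) : ℕ :=
  sInf {k | ∃ S, S ⊆ M ∧ (∀ M', IsPMOn G T M' → S ⊆ M' → M' = M) ∧ S.ncard = k}

/-- `{i,j}` is one of the `k` special pairs `{2t, 2t+1}` (0-indexed), `t < k`. -/
def pairIdx (k : ℕ) {n : ℕ} (i j : Fin n) : Prop :=
  ∃ t, t < k ∧ ((i.val = 2 * t ∧ j.val = 2 * t + 1) ∨ (j.val = 2 * t ∧ i.val = 2 * t + 1))

/-- The graph `H_k` on vertices `u_0,…,u_{n-1}` (left copy) and `v_0,…,v_{n-1}`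
(right copy): edges `u_i v_i` for all `i`; `u_{2t} u_{2t+1}` and `v_{2t} v_{2t+1}`
for `t < k`; and `u_i v_j`, `u_j v_i` for every pair `i ≠ j` that is not one of the
`k` special pairs. -/
def Hgraph (n k : ℕ) : SimpleGraph (Fin n ⊕ Fin n) :=
  SimpleGraph.fromRel (fun x y =>
    match x, y with
    | Sum.inl i, Sum.inr j => i = j ∨ ¬ pairIdx k i j
    | Sum.inl i, Sum.inl j => pairIdx k i j
    | Sum.inr i, Sum.inr j => pairIdx k i j
    | Sum.inr _, Sum.inl _ => False)

/-- The perfect matching `M₀ = {u_i v_i : i}` of `H_k`. -/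
def M0 (n : ℕ) : Set (Sym2 (Fin n ⊕ Fin n)) :=
  {e | ∃ i : Fin n, e = s(Sum.inl i, Sum.inr i)}


/-! Deleting two edges `e, f` of `M` leaves a forcing set unless `e` and `f` lie on an
`M`-alternating 4-cycle, and then switching `M` along that cycle gives a second perfect matching
containing `M \ {e, f}`. Hence `f(G, M) = |M| - 1` exactly when every two edges of `M` lie on an
`M`-alternating 4-cycle, and `f(G, M) ≤ |M| - 2` otherwise.

If two edges of `M` span a chord besides their alternating 4-cycle, deleting the chord keeps
every such cycle, so `F` does not drop. Conversely, if every two edges of `M` induce a chordless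
4-cycle and `N` is a perfect matching of `G - xy`, then the `N`-edges at `x` and at `y`, or else
those at `x` and at the `M`-partner of `y`, lie on no alternating 4-cycle of `G - xy`. -/

/-- For `e, f ∈ M` this says that `e` and `f` lie on an `M`-alternating 4-cycle. -/
def AltSquare {V : Type*} (G : SimpleGraph V) (e f : Sym2 V) : Prop :=
  ∃ u v x y, e = s(u, v) ∧ f = s(x, y) ∧ G.Adj u x ∧ G.Adj v y

def InducesAltSquares {V : Type*} (G : SimpleGraph V) (M : Set (Sym2 V)) : Prop :=
  ∀ u v x y : V, s(u, v) ∈ M → s(x, y) ∈ M → s(u, v) ≠ s(x, y) →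
    ((G.Adj u x ∧ G.Adj v y ∧ ¬ G.Adj u y ∧ ¬ G.Adj v x) ∨
     (G.Adj u y ∧ G.Adj v x ∧ ¬ G.Adj u x ∧ ¬ G.Adj v y))

section PerfectMatching

variable {V : Type*} {G G' : SimpleGraph V} {M M' : Set (Sym2 V)} {e f : Sym2 V} {u v x y : V}

lemma IsPM.adj_of_mem (hM : IsPM G M) (h : s(u, v) ∈ M) : G.Adj u v :=
  hM.1 h

lemma IsPM.eq_of_mem_of_mem (hM : IsPM G M) (he : e ∈ M) (hf : f ∈ M) (hve : v ∈ e)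
    (hvf : v ∈ f) : e = f :=
  by_contra fun h => hM.2.1 e he f hf h v hve hvf

lemma IsPM.exists_mem (hM : IsPM G M) (v : V) : ∃ w, s(v, w) ∈ M := by
  obtain ⟨e, he, hve⟩ := hM.2.2 v
  obtain ⟨w, rfl⟩ := Sym2.mem_iff_exists.1 hve
  exact ⟨w, he⟩

lemma IsPM.right_unique (hM : IsPM G M) (h : s(v, x) ∈ M) (h' : s(v, y) ∈ M) : x = y :=
  Sym2.congr_right.1 (hM.eq_of_mem_of_mem h h' (Sym2.mem_mk_left v x) (Sym2.mem_mk_left v y))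

lemma IsPM.ne_of_mem_of_ne (hM : IsPM G M) (he : s(u, v) ∈ M) (hf : s(x, y) ∈ M)
    (hne : s(u, v) ≠ s(x, y)) : u ≠ x ∧ u ≠ y ∧ v ≠ x ∧ v ≠ y := by
  have h := hM.2.1 _ he _ hf hne
  simp only [Sym2.mem_iff] at h
  exact ⟨fun hux => h u (.inl rfl) (.inl hux), fun huy => h u (.inl rfl) (.inr huy),
    fun hvx => h v (.inr rfl) (.inl hvx), fun hvy => h v (.inr rfl) (.inr hvy)⟩

lemma IsPM.eq_of_subset (hM : IsPM G M) (hM' : IsPM G M') (h : M ⊆ M') : M' = M := by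
  refine Set.Subset.antisymm (fun e he => ?_) h
  obtain ⟨v, hv⟩ : ∃ v, v ∈ e := e.ind fun a _ => ⟨a, Sym2.mem_mk_left _ _⟩
  obtain ⟨f, hf, hvf⟩ := hM.2.2 v
  rwa [hM'.eq_of_mem_of_mem he (h hf) hv hvf]

lemma IsPM.of_subset_edgeSet (hM : IsPM G M) (h : M ⊆ G'.edgeSet) : IsPM G' M :=
  ⟨h, hM.2⟩

lemma IsPM.ncard_eq [Fintype V] {n : ℕ} (hM : IsPM G M) (hcard : Fintype.card V = 2 * n) :
    M.ncard = n := by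
  classical
  choose edge hedge hmem using hM.2.2
  have hfiber : ∀ e ∈ M.toFinset, (Finset.univ.filter (edge · = e)).card = 2 := by
    intro e he
    rw [Set.mem_toFinset] at he
    induction e using Sym2.ind with
    | _ a b =>
      have : Finset.univ.filter (edge · = s(a, b)) = {a, b} := by
        ext w
        simp only [Finset.mem_filter, Finset.mem_univ, true_and, Finset.mem_insert,
          Finset.mem_singleton, ← Sym2.mem_iff]
        exact ⟨fun h => h ▸ hmem w, hM.eq_of_mem_of_mem (hedge w) he (hmem w)⟩
      rw [this, Finset.card_pair (hM.adj_of_mem he).ne]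
  have hsum := Finset.card_eq_sum_card_fiberwise (s := Finset.univ) (t := M.toFinset)
    (f := edge) (fun w _ => Set.mem_toFinset.2 (hedge w))
  rw [Finset.sum_const_nat hfiber, Finset.card_univ, hcard] at hsum
  rw [Set.ncard_eq_toFinset_card']
  omega

lemma IsPM.diff_union (hM : IsPM G M) {A B : Set (Sym2 V)} (hA : A ⊆ M) (hB : B ⊆ G.edgeSet)
    (hBdisj : ∀ e ∈ B, ∀ f ∈ B, e ≠ f → ∀ v, v ∈ e → v ∉ f)
    (hcov : ∀ v, (∃ e ∈ A, v ∈ e) ↔ (∃ e ∈ B, v ∈ e)) : IsPM G (M \ A ∪ B) := by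
  have old_new : ∀ e ∈ M \ A, ∀ f ∈ B, ∀ v, v ∈ e → v ∉ f := by
    rintro e ⟨he, heA⟩ f hf v hve hvf
    obtain ⟨g, hg, hvg⟩ := (hcov v).2 ⟨f, hf, hvf⟩
    exact heA (hM.eq_of_mem_of_mem he (hA hg) hve hvg ▸ hg)
  refine ⟨Set.union_subset (Set.sdiff_subset.trans hM.1) hB, ?_, fun v => ?_⟩
  · rintro e (he | he) f (hf | hf) hef v hve
    · exact hM.2.1 e he.1 f hf.1 hef v hve
    · exact old_new e he f hf v hve
    · exact fun hvf => old_new f hf e he v hvf hve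
    · exact hBdisj e he f hf hef v hve
  · obtain ⟨e, he, hve⟩ := hM.2.2 v
    by_cases heA : e ∈ A
    · obtain ⟨f, hf, hvf⟩ := (hcov v).1 ⟨e, heA, hve⟩
      exact ⟨f, Or.inr hf, hvf⟩
    · exact ⟨e, Or.inl ⟨he, heA⟩, hve⟩

end PerfectMatching

section AltSquare

variable {V : Type*} {G : SimpleGraph V} {M : Set (Sym2 V)} {e f : Sym2 V} {u v x y : V}

lemma altSquare_mk_iff :
    AltSquare G s(u, v) s(x, y) ↔ (G.Adj u x ∧ G.Adj v y) ∨ (G.Adj u y ∧ G.Adj v x) := by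
  constructor
  · rintro ⟨p, q, r, t, h1, h2, hpr, hqt⟩
    rcases Sym2.eq_iff.1 h1 with ⟨rfl, rfl⟩ | ⟨rfl, rfl⟩ <;>
      rcases Sym2.eq_iff.1 h2 with ⟨rfl, rfl⟩ | ⟨rfl, rfl⟩ <;> tauto
  · rintro (⟨hux, hvy⟩ | ⟨huy, hvx⟩)
    · exact ⟨u, v, x, y, rfl, rfl, hux, hvy⟩
    · exact ⟨u, v, y, x, rfl, Sym2.eq_swap, huy, hvx⟩

lemma AltSquare.symm : AltSquare G e f → AltSquare G f e := by
  rintro ⟨u, v, x, y, rfl, rfl, hux, hvy⟩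
  exact ⟨x, y, u, v, rfl, rfl, hux.symm, hvy.symm⟩

lemma IsPM.exists_swap (hM : IsPM G M) (he : e ∈ M) (hf : f ∈ M) (hne : e ≠ f)
    (hsq : AltSquare G e f) : ∃ M', IsPM G M' ∧ M \ {e, f} ⊆ M' ∧ M' ≠ M := by
  obtain ⟨u, v, x, y, rfl, rfl, hux, hvy⟩ := hsq
  obtain ⟨hux', huy', hvx', hvy'⟩ := hM.ne_of_mem_of_ne he hf hne
  have huv := (hM.adj_of_mem he).ne
  have hxy := (hM.adj_of_mem hf).ne
  refine ⟨M \ {s(u, v), s(x, y)} ∪ {s(u, x), s(v, y)},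
    hM.diff_union (Set.pair_subset he hf) ?_ ?_ ?_,
    Set.subset_union_left, fun h => ?_⟩
  · rintro _ (rfl | rfl)
    exacts [hux, hvy]
  · rintro _ (rfl | rfl) _ (rfl | rfl) hgh w <;> grind
  · intro w
    simp only [Set.mem_insert_iff, Set.mem_singleton_iff, exists_eq_or_imp, exists_eq_left,
      Sym2.mem_iff]
    tauto
  · have hux_mem : s(u, x) ∈ M := h ▸ Or.inr (Set.mem_insert _ _)
    exact hvx' (hM.right_unique he hux_mem)

end AltSquare

section Forcing

variable {V : Type*} {G : SimpleGraph V} {M M' S : Set (Sym2 V)} {e f : Sym2 V}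

lemma IsPM.altSquare_of_notMem (hM : IsPM G M) (hM' : IsPM G M') (he : e ∈ M) (hf : f ∈ M)
    (hsub : M \ {e, f} ⊆ M') (heM' : e ∉ M') : AltSquare G e f := by
  induction e using Sym2.ind with | _ u v => ?_
  induction f using Sym2.ind with | _ x y => ?_
  have hpartner : ∀ a ∈ s(u, v), ∀ w, s(a, w) ∈ M' → w = x ∨ w = y := by
    intro a ha w haw
    obtain ⟨w', hw'⟩ := hM.exists_mem w
    by_cases hT : s(w, w') ∈ ({s(u, v), s(x, y)} : Set (Sym2 V))
    · rcases hT with h | h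
      · have hw : w ∈ s(u, v) := h ▸ Sym2.mem_mk_left w w'
        refine absurd ?_ heM'
        rwa [(Sym2.mem_and_mem_iff (hM'.adj_of_mem haw).ne).1 ⟨ha, hw⟩]
      · rw [← Sym2.mem_iff, ← h]
        exact Sym2.mem_mk_left w w'
    · have h1 := hM'.eq_of_mem_of_mem haw (hsub ⟨hw', hT⟩) (Sym2.mem_mk_right a w)
        (Sym2.mem_mk_left w w')
      have h2 := hM.eq_of_mem_of_mem he (h1 ▸ hw') ha (Sym2.mem_mk_left a w)
      exact absurd (h2 ▸ haw) heM'
  obtain ⟨w, hw⟩ := hM'.exists_mem u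
  obtain ⟨z, hz⟩ := hM'.exists_mem v
  have hwz : w ≠ z := by
    rintro rfl
    have := hM'.eq_of_mem_of_mem hw hz (Sym2.mem_mk_right u w) (Sym2.mem_mk_right v w)
    exact (hM.adj_of_mem he).ne (Sym2.congr_left.1 this)
  rw [altSquare_mk_iff]
  rcases hpartner u (Sym2.mem_mk_left u v) w hw with rfl | rfl <;>
    rcases hpartner v (Sym2.mem_mk_right u v) z hz with rfl | rfl
  · exact absurd rfl hwz
  · exact Or.inl ⟨hM'.adj_of_mem hw, hM'.adj_of_mem hz⟩
  · exact Or.inr ⟨hM'.adj_of_mem hw, hM'.adj_of_mem hz⟩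
  · exact absurd rfl hwz

lemma IsPM.isForcingSet_diff_pair (hM : IsPM G M) (he : e ∈ M) (hf : f ∈ M)
    (h : ¬ AltSquare G e f) : IsForcingSet G M (M \ {e, f}) := by
  refine ⟨Set.sdiff_subset, fun M' hM' hsub => hM.eq_of_subset hM' fun g hg => ?_⟩
  by_cases hg' : g ∈ ({e, f} : Set (Sym2 V))
  · by_contra hgM'
    rcases hg' with rfl | rfl
    · exact h (hM.altSquare_of_notMem hM' he hf hsub hgM')
    · exact h (hM.altSquare_of_notMem hM' hf he (Set.pair_comm e g ▸ hsub) hgM').symm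
  · exact hsub ⟨hg, hg'⟩

lemma IsPM.isForcingSet_self (hM : IsPM G M) : IsForcingSet G M M :=
  ⟨subset_rfl, fun _ hM' h => hM.eq_of_subset hM' h⟩

lemma forcingNum_le (hS : IsForcingSet G M S) : forcingNum G M ≤ S.ncard :=
  Nat.sInf_le ⟨S, hS, rfl⟩

lemma IsPM.exists_isForcingSet (hM : IsPM G M) :
    ∃ S, IsForcingSet G M S ∧ S.ncard = forcingNum G M :=
  Nat.sInf_mem (s := {k | ∃ S, IsForcingSet G M S ∧ S.ncard = k})
    ⟨_, M, hM.isForcingSet_self, rfl⟩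

lemma IsForcingSet.ncard_diff_le_one [Finite V] (hM : IsPM G M)
    (hsq : M.Pairwise (AltSquare G)) (hS : IsForcingSet G M S) : (M \ S).ncard ≤ 1 := by
  by_contra! h
  obtain ⟨e, f, he, hf, hne⟩ := (Set.one_lt_ncard_iff (Set.toFinite _)).1 h
  obtain ⟨M', hM', hsub, hM'M⟩ := hM.exists_swap he.1 hf.1 hne (hsq he.1 hf.1 hne)
  refine hM'M (hS.2 M' hM' fun g hg => hsub ⟨hS.1 hg, ?_⟩)
  rintro (rfl | rfl)
  exacts [he.2 hg, hf.2 hg]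

lemma forcingNum_le_ncard_sub_two [Finite V] (hM : IsPM G M)
    (h : ¬ M.Pairwise (AltSquare G)) : forcingNum G M ≤ M.ncard - 2 := by
  obtain ⟨e, he, f, hf, hne, hef⟩ : ∃ e ∈ M, ∃ f ∈ M, e ≠ f ∧ ¬ AltSquare G e f := by
    simpa [Set.Pairwise] using h
  have hsub : ({e, f} : Set (Sym2 V)) ⊆ M := Set.pair_subset he hf
  have := forcingNum_le (hM.isForcingSet_diff_pair he hf hef)
  rwa [Set.ncard_sdiff hsub, Set.ncard_pair hne] at this

lemma pairwise_altSquare_iff [Finite V] (hM : IsPM G M) :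
    M.Pairwise (AltSquare G) ↔ M.ncard - 1 ≤ forcingNum G M := by
  refine ⟨fun hsq => ?_, fun h => by_contra fun hsq => ?_⟩
  · obtain ⟨S, hS, hSn⟩ := hM.exists_isForcingSet
    have := hS.ncard_diff_le_one hM hsq
    rw [Set.ncard_sdiff hS.1] at this
    omega
  · have h2 : 1 < M.ncard := by
      by_contra! h1
      exact hsq ((Set.ncard_le_one_iff_subsingleton.1 h1).pairwise _)
    have := forcingNum_le_ncard_sub_two hM hsq
    omega

lemma maxForcing_le {m : ℕ} (h : ∀ N, IsPM G N → forcingNum G N ≤ m) : maxForcing G ≤ m :=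
  csSup_le' (by rintro k ⟨N, hN, rfl⟩; exact h N hN)

lemma IsPM.forcingNum_le_maxForcing [Finite V] (hM : IsPM G M) :
    forcingNum G M ≤ maxForcing G := by
  refine le_csSup ⟨Nat.card (Sym2 V), ?_⟩ ⟨M, hM, rfl⟩
  rintro k ⟨N, hN, rfl⟩
  exact (forcingNum_le hN.isForcingSet_self).trans (Set.ncard_le_card N)

end Forcing

section Minimality

variable {V : Type*} {G : SimpleGraph V} {M N : Set (Sym2 V)} {a b b' u v x y : V}

lemma IsPM.altSquare_deleteEdges (hM : IsPM G M) {ea eb g h : Sym2 V}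
    (hea : ea ∈ M) (heb : eb ∈ M) (ha : a ∈ ea) (hb : b ∈ eb)
    (hab : AltSquare (G.deleteEdges {s(a, b)}) ea eb) (hg : g ∈ M) (hh : h ∈ M)
    (hgh : AltSquare G g h) : AltSquare (G.deleteEdges {s(a, b)}) g h := by
  obtain ⟨p, q, r, t, rfl, rfl, hpr, hqt⟩ := hgh
  have hchord : ∀ {p' r'}, p' ∈ s(p, q) → r' ∈ s(r, t) → s(p', r') = s(a, b) →
      AltSquare (G.deleteEdges {s(a, b)}) s(p, q) s(r, t) := by
    intro p' r' hp hr h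
    rcases Sym2.eq_iff.1 h with ⟨rfl, rfl⟩ | ⟨rfl, rfl⟩
    · rwa [hM.eq_of_mem_of_mem hg hea hp ha, hM.eq_of_mem_of_mem hh heb hr hb]
    · rw [hM.eq_of_mem_of_mem hg heb hp hb, hM.eq_of_mem_of_mem hh hea hr ha]
      exact hab.symm
  by_cases h1 : s(p, r) = s(a, b)
  · exact hchord (Sym2.mem_mk_left p q) (Sym2.mem_mk_left r t) h1
  by_cases h2 : s(q, t) = s(a, b)
  · exact hchord (Sym2.mem_mk_right p q) (Sym2.mem_mk_right r t) h2
  exact ⟨p, q, r, t, rfl, rfl, by simpa [hpr] using h1, by simpa [hqt] using h2⟩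

lemma IsPM.ncard_sub_two_lt_maxForcing_deleteEdges [Finite V] (hM : IsPM G M)
    (hsq : M.Pairwise (AltSquare G)) (huv : s(u, v) ∈ M) (hxy : s(x, y) ∈ M)
    (hne : s(u, v) ≠ s(x, y)) (hux : G.Adj u x) (hvy : G.Adj v y) :
    M.ncard - 2 < maxForcing (G.deleteEdges {s(u, y)}) := by
  obtain ⟨-, -, -, hvy'⟩ := hM.ne_of_mem_of_ne huv hxy hne
  have huyM : s(u, y) ∉ M := fun h => hvy' (hM.right_unique huv h)
  have hMc : IsPM (G.deleteEdges {s(u, y)}) M := hM.of_subset_edgeSet <| by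
    rw [edgeSet_deleteEdges]
    exact Set.subset_sdiff_singleton hM.1 huyM
  have hsquare : AltSquare (G.deleteEdges {s(u, y)}) s(u, v) s(x, y) :=
    ⟨u, v, x, y, rfl, rfl,
      deleteEdges_adj.2 ⟨hux, fun h => (hM.adj_of_mem hxy).ne (Sym2.congr_right.1 h)⟩,
      deleteEdges_adj.2 ⟨hvy, fun h => (hM.adj_of_mem huv).ne.symm (Sym2.congr_left.1 h)⟩⟩
  have hsq' : M.Pairwise (AltSquare (G.deleteEdges {s(u, y)})) := fun g hg h hh hgh =>
    hM.altSquare_deleteEdges huv hxy (Sym2.mem_mk_left u v) (Sym2.mem_mk_right x y) hsquare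
      hg hh (hsq hg hh hgh)
  have h2 : 1 < M.ncard := (Set.one_lt_ncard_iff (Set.toFinite _)).2 ⟨_, _, huv, hxy, hne⟩
  have := (pairwise_altSquare_iff hMc).1 hsq'
  have := hMc.forcingNum_le_maxForcing
  omega

lemma IsPM.inducesAltSquares [Fintype V] {n : ℕ} (hcard : Fintype.card V = 2 * n)
    (hM : IsPM G M) (hsq : M.Pairwise (AltSquare G))
    (hmin : ∀ e ∈ G.edgeSet, maxForcing (G.deleteEdges {e}) ≤ n - 2) :
    InducesAltSquares G M := by
  have hchord : ∀ {u v x y}, s(u, v) ∈ M → s(x, y) ∈ M → G.Adj u x → G.Adj v y →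
      ¬ G.Adj u y := by
    intro u v x y huv hxy hux hvy huy
    have hne : s(u, v) ≠ s(x, y) := fun h => by
      rcases Sym2.eq_iff.1 h with ⟨rfl, -⟩ | ⟨rfl, -⟩
      exacts [hux.ne rfl, huy.ne rfl]
    have hlt := hM.ncard_sub_two_lt_maxForcing_deleteEdges hsq huv hxy hne hux hvy
    rw [hM.ncard_eq hcard] at hlt
    exact absurd (hmin _ huy) hlt.not_ge
  intro u v x y huv hxy hne
  have hvu : s(v, u) ∈ M := by rwa [Sym2.eq_swap]
  have hyx : s(y, x) ∈ M := by rwa [Sym2.eq_swap]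
  rcases altSquare_mk_iff.1 (hsq huv hxy hne) with ⟨hux, hvy⟩ | ⟨huy, hvx⟩
  · exact Or.inl ⟨hux, hvy, hchord huv hxy hux hvy, hchord hvu hyx hvy hux⟩
  · exact Or.inr ⟨huy, hvx, hchord huv hyx huy hvx, hchord hvu hxy hvx huy⟩

lemma InducesAltSquares.not_adj (hexact : InducesAltSquares G M) (hM : IsPM G M)
    (hab : G.Adj a b) (habM : s(a, b) ∉ M) (hb : s(b, b') ∈ M) : ¬ G.Adj a b' := by
  obtain ⟨a', ha⟩ := hM.exists_mem a
  have hne : s(a, a') ≠ s(b, b') := by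
    intro h
    rcases Sym2.eq_iff.1 h with ⟨rfl, -⟩ | ⟨rfl, rfl⟩
    · exact hab.ne rfl
    · exact habM ha
  rcases hexact a a' b b' ha hb hne with ⟨-, -, h, -⟩ | ⟨-, -, h, -⟩
  · exact h
  · exact absurd hab h

lemma IsPM.not_pairwise_altSquare {H : SimpleGraph V} (hN : IsPM H N) (ha : s(x, a) ∈ N)
    (hb : s(y, b) ∈ N) (hxy : x ≠ y) (hHxy : ¬ H.Adj x y) (h : ¬ H.Adj x b ∨ ¬ H.Adj a y) :
    ¬ N.Pairwise (AltSquare H) := by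
  intro hsq
  have hne : s(x, a) ≠ s(y, b) := by
    intro h
    rcases Sym2.eq_iff.1 h with ⟨rfl, -⟩ | ⟨rfl, rfl⟩
    · exact hxy rfl
    · exact hHxy (hN.adj_of_mem ha)
  have := altSquare_mk_iff.1 (hsq ha hb hne)
  tauto

lemma InducesAltSquares.not_pairwise_deleteEdges (hexact : InducesAltSquares G M)
    (hM : IsPM G M) (hxy : G.Adj x y) (hN : IsPM (G.deleteEdges {s(x, y)}) N) :
    ¬ N.Pairwise (AltSquare (G.deleteEdges {s(x, y)})) := by
  set H := G.deleteEdges {s(x, y)}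
  have hHG : ∀ {p q}, H.Adj p q → G.Adj p q := fun h => deleteEdges_le _ h
  have hHxy : ¬ H.Adj x y := by simp [H]
  obtain ⟨a, ha⟩ := hN.exists_mem x
  obtain ⟨b, hb⟩ := hN.exists_mem y
  by_cases hcross : H.Adj x b ∧ H.Adj a y
  swap
  · exact hN.not_pairwise_altSquare ha hb hxy.ne hHxy (not_and_or.1 hcross)
  obtain ⟨hxb, hay⟩ := hcross
  have hxyM : s(x, y) ∉ M := by
    intro hxyM
    have hbx : b ≠ x := by
      rintro rfl
      exact hHxy (hN.adj_of_mem hb).symm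
    have hbyM : s(b, y) ∉ M := fun h =>
      hbx (hM.right_unique (by rwa [Sym2.eq_swap]) (by rwa [Sym2.eq_swap]))
    exact hexact.not_adj hM (hHG (hN.adj_of_mem hb)).symm hbyM (by rwa [Sym2.eq_swap])
      (hHG hxb).symm
  obtain ⟨py, hpy⟩ := hM.exists_mem y
  have hxpy : ¬ G.Adj x py := hexact.not_adj hM hxy hxyM hpy
  have hapy : a ≠ py := by
    rintro rfl
    exact hxpy (hHG (hN.adj_of_mem ha))
  have hayM : s(a, y) ∉ M := fun h => hapy (hM.right_unique (by rwa [Sym2.eq_swap]) hpy)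
  have hapy' : ¬ G.Adj a py := hexact.not_adj hM (hHG hay) hayM hpy
  have hxpy_ne : x ≠ py := by
    rintro rfl
    exact hxyM (by rwa [Sym2.eq_swap])
  obtain ⟨c, hc⟩ := hN.exists_mem py
  exact hN.not_pairwise_altSquare ha hc hxpy_ne (fun h => hxpy (hHG h))
    (.inr fun h => hapy' (hHG h))

lemma InducesAltSquares.maxForcing_deleteEdges_le [Fintype V] {n : ℕ}
    (hcard : Fintype.card V = 2 * n) (hexact : InducesAltSquares G M) (hM : IsPM G M)
    {e : Sym2 V} (he : e ∈ G.edgeSet) : maxForcing (G.deleteEdges {e}) ≤ n - 2 := by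
  induction e using Sym2.ind with | _ x y => ?_
  refine maxForcing_le fun N hN => ?_
  rw [← hN.ncard_eq hcard]
  exact forcingNum_le_ncard_sub_two hN (hexact.not_pairwise_deleteEdges hM he hN)

end Minimality

theorem stmt1_general {V : Type*} [Fintype V] (n : ℕ)
    (G : SimpleGraph V) (hcard : Fintype.card V = 2 * n)
    (M : Set (Sym2 V)) (hM : IsPM G M) (hf : forcingNum G M = n - 1) :
    (∀ e ∈ G.edgeSet, maxForcing (G.deleteEdges {e}) ≤ n - 2) ↔
      ∀ u v x y : V, s(u, v) ∈ M → s(x, y) ∈ M → s(u, v) ≠ s(x, y) →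
        ((G.Adj u x ∧ G.Adj v y ∧ ¬ G.Adj u y ∧ ¬ G.Adj v x) ∨
         (G.Adj u y ∧ G.Adj v x ∧ ¬ G.Adj u x ∧ ¬ G.Adj v y)) := by
  have hsq : M.Pairwise (AltSquare G) :=
    (pairwise_altSquare_iff hM).2 (by rw [hM.ncard_eq hcard, hf])
  exact ⟨hM.inducesAltSquares hcard hsq,
    fun (hexact : InducesAltSquares G M) _ he => hexact.maxForcing_deleteEdges_le hcard hM he⟩

/-- Lemma 2.2, part 2. -/
theorem stmt1 {V : Type*} [Fintype V] (n : ℕ) (hn : 2 ≤ n)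
    (G : SimpleGraph V) (hcard : Fintype.card V = 2 * n)
    (M : Set (Sym2 V)) (hM : IsPM G M) (hf : forcingNum G M = n - 1) :
    (∀ e ∈ G.edgeSet, maxForcing (G.deleteEdges {e}) ≤ n - 2) ↔
      ∀ u v x y : V, s(u, v) ∈ M → s(x, y) ∈ M → s(u, v) ≠ s(x, y) →
        ((G.Adj u x ∧ G.Adj v y ∧ ¬ G.Adj u y ∧ ¬ G.Adj v x) ∨
         (G.Adj u y ∧ G.Adj v x ∧ ¬ G.Adj u x ∧ ¬ G.Adj v y)) :=
  stmt1_general n G hcard M hM hf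
end

section
/- Let n ≥ 2 and let G ∈ 𝒢_{2n} satisfy F(G) = n−1. Then G has no fixed double bond; that is, for every edge e of G, the graph G−e (obtained by deleting the edge e) still has a perfect matching, so no edge of G is contained in every perfect matching of G. -/
open SimpleGraph

/-!
If an edge `e` lies in every perfect matching, then for any perfect matching `M` and any
other edge `g ∈ M`, the set `M \ {e, g}` already forces `M`: a perfect matching containing it
also contains `e`, hence all of `M` but `g`, and then it must be `M`. So every perfect matching
of a graph on `2n` vertices has forcing number at most `n - 2`, contradicting `F(G) = n - 1`.
-/

namespace IsPM

variable {V : Type*} {G : SimpleGraph V} {M M' : Set (Sym2 V)}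

theorem two_mul_ncard [Fintype V] (hM : IsPM G M) : 2 * M.ncard = Fintype.card V := by
  classical
  obtain ⟨hsub, hdisj, hcov⟩ := hM
  have hunion : (Set.toFinite M).toFinset.biUnion Sym2.toFinset = Finset.univ := by
    refine Finset.eq_univ_of_forall fun v => ?_
    obtain ⟨e, he, hv⟩ := hcov v
    simpa using ⟨e, he, hv⟩
  have hpairwise : ((Set.toFinite M).toFinset : Set (Sym2 V)).PairwiseDisjoint Sym2.toFinset := by
    intro e he f hf hne
    simp only [Set.Finite.coe_toFinset] at he hf
    exact Finset.disjoint_left.2 fun v hve hvf =>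
      hdisj e he f hf hne v (Sym2.mem_toFinset.1 hve) (Sym2.mem_toFinset.1 hvf)
  rw [Set.ncard_eq_toFinset_card M, ← Finset.card_univ, ← hunion, Finset.card_biUnion hpairwise,
    Finset.sum_congr rfl fun e he => Sym2.card_toFinset_of_not_isDiag e
      (G.not_isDiag_of_mem_edgeSet (hsub ((Set.toFinite M).mem_toFinset.1 he))),
    Finset.sum_const, smul_eq_mul, mul_comm]

theorem eq_of_subset_s2 (hM : IsPM G M) (hM' : IsPM G M') (h : M' ⊆ M) : M' = M := by
  refine h.antisymm fun x hx => ?_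
  have hvx : x.out.1 ∈ x := Sym2.out_fst_mem x
  obtain ⟨y, hy, hvy⟩ := hM'.2.2 x.out.1
  by_cases hyx : y = x
  · exact hyx ▸ hy
  · exact absurd hvx (hM.2.1 y (h hy) x hx hyx _ hvy)

theorem eq_of_diff_singleton_subset {g : Sym2 V} (hM : IsPM G M) (hM' : IsPM G M')
    (h : M \ {g} ⊆ M') : M' = M := by
  refine hM.eq_of_subset_s2 hM' fun x hx => ?_
  have covered : ∀ w ∈ x, x ∈ M ∨ (g ∈ M ∧ w ∈ g) := by
    intro w hw
    obtain ⟨y, hy, hwy⟩ := hM.2.2 w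
    by_cases hyg : y = g
    · exact .inr ⟨hyg ▸ hy, hyg ▸ hwy⟩
    · have hxy : x = y := by
        by_contra hxy
        exact hM'.2.1 x hx y (h ⟨hy, hyg⟩) hxy w hw hwy
      exact .inl (hxy ▸ hy)
  induction x using Sym2.ind with
  | _ c d =>
    rcases covered c (Sym2.mem_mk_left c d) with hxM | ⟨hgM, hcg⟩
    · exact hxM
    rcases covered d (Sym2.mem_mk_right c d) with hxM | ⟨-, hdg⟩
    · exact hxM
    have hcd : c ≠ d := G.ne_of_adj (hM'.1 hx)
    exact (Sym2.mem_and_mem_iff hcd).1 ⟨hcg, hdg⟩ ▸ hgM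

theorem deleteEdges {s : Set (Sym2 V)} (hM : IsPM G M) (hs : Disjoint M s) :
    IsPM (G.deleteEdges s) M := by
  refine ⟨fun x hx => ?_, hM.2⟩
  rw [edgeSet_deleteEdges]
  exact ⟨hM.1 hx, hs.notMem_of_mem_left hx⟩

end IsPM

theorem isForcingSet_diff_pair_of_forall_mem {V : Type*} {G : SimpleGraph V}
    {M : Set (Sym2 V)} {e g : Sym2 V} (hfixed : ∀ M', IsPM G M' → e ∈ M') (hM : IsPM G M) :
    IsForcingSet G M (M \ {e, g}) := by
  refine ⟨Set.sdiff_subset, fun M' hM' hsub => hM.eq_of_diff_singleton_subset (g := g) hM' ?_⟩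
  rintro x ⟨hxM, hxg⟩
  by_cases hxe : x = e
  · exact hxe ▸ hfixed M' hM'
  · exact hsub ⟨hxM, by simp [hxe, hxg]⟩

theorem forcingNum_le_ncard_sub_two_of_forall_mem {V : Type*} {G : SimpleGraph V}
    {M : Set (Sym2 V)} {e g : Sym2 V} (hfixed : ∀ M', IsPM G M' → e ∈ M') (hM : IsPM G M)
    (hg : g ∈ M) (hge : g ≠ e) : forcingNum G M ≤ M.ncard - 2 := by
  have hpair : ({e, g} : Set (Sym2 V)) ⊆ M := Set.insert_subset (hfixed M hM) (by simpa using hg)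
  refine Nat.sInf_le ⟨M \ {e, g}, isForcingSet_diff_pair_of_forall_mem hfixed hM, ?_⟩
  rw [Set.ncard_sdiff hpair, Set.ncard_pair hge.symm]

/-- Lemma 2.3(i). -/
theorem stmt2 {V : Type*} [Fintype V] (n : ℕ) (hn : 2 ≤ n)
    (G : SimpleGraph V) (hcard : Fintype.card V = 2 * n)
    (hPM : ∃ M, IsPM G M) (hF : maxForcing G = n - 1) :
    ∀ e ∈ G.edgeSet,
      (∃ M, IsPM (G.deleteEdges {e}) M) ∧ (∃ M, IsPM G M ∧ e ∉ M) := by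
  intro e _
  obtain ⟨M, hM, heM⟩ : ∃ M, IsPM G M ∧ e ∉ M := by
    by_contra! hfixed
    have hbound : ∀ M, IsPM G M → forcingNum G M ≤ n - 2 := by
      intro M hM
      have hMn : M.ncard = n := by have := hM.two_mul_ncard; omega
      obtain ⟨g, hg, hge⟩ := Set.exists_ne_of_one_lt_ncard (by omega : 1 < M.ncard) e
      exact hMn ▸ forcingNum_le_ncard_sub_two_of_forall_mem hfixed hM hg hge
    obtain ⟨M₀, hM₀⟩ := hPM
    have : maxForcing G ≤ n - 2 :=
      csSup_le ⟨_, M₀, hM₀, rfl⟩ fun _ ⟨M, hM, hk⟩ => hk ▸ hbound M hM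
    omega
  exact ⟨⟨M, hM.deleteEdges (Set.disjoint_singleton_right.2 heM)⟩, M, hM, heM⟩
end
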